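/- Applying the measurement operator I ⊗ I ⊗ M_0^B (with M_0^B as in the paper) to |ψ⟩ = (1/√3)∑_l |l⟩⊗|ψ_l⟩ and renormalizing yields (1/√3)∑_l |l⟩⊗|ψ_l^{(0)}⟩, where |ψ_0^{(0)}⟩ = √(2/11)|Φ_2⟩ ⊕ √(9/11)|Ψ⟩, |ψ_1^{(0)}⟩ = √(2/11)γ₁(X_2⊗I)|Φ_2⟩ ⊕ √(9/11)(X_9³⊗I)|Ψ⟩, |ψ_2^{(0)}⟩ = √(2/11)γ₂(Z_2⊗I)|Φ_2⟩ ⊕ √(9/11)(X_9⁶⊗I)|Ψ⟩, with |Ψ⟩ = (1/√3)(|0⟩⊗|0⟩+|1⟩⊗|1⟩+|2⟩⊗|2⟩) ∈ ℂ⁹⊗ℂ⁹. -/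

import Mathlib

open Complex

noncomputable def Xmat (k : ℕ) : Matrix (Fin k) (Fin k) ℂ :=
  fun i j => if (i : ℕ) = ((j : ℕ) + 1) % k then 1 else 0

noncomputable def Zmat (k : ℕ) : Matrix (Fin k) (Fin k) ℂ :=
  Matrix.diagonal fun l => Complex.exp (2 * Real.pi * Complex.I * (l : ℕ) / (k : ℕ))

noncomputable def PhiME (k : ℕ) : EuclideanSpace ℂ (Fin k × Fin k) :=
  WithLp.toLp 2 fun p => if p.1 = p.2 then ((1 / Real.sqrt k : ℝ) : ℂ) else 0

/-- `|Ψ⟩ = (1/√3)(|0⟩⊗|0⟩+|1⟩⊗|1⟩+|2⟩⊗|2⟩) ∈ ℂ⁹ ⊗ ℂ⁹`. -/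
noncomputable def PsiNine : EuclideanSpace ℂ (Fin 9 × Fin 9) :=
  WithLp.toLp 2 fun p => if p.1 = p.2 ∧ (p.1 : ℕ) < 3 then ((1 / Real.sqrt 3 : ℝ) : ℂ) else 0

noncomputable def opL {k : ℕ} (U : Matrix (Fin k) (Fin k) ℂ)
    (v : EuclideanSpace ℂ (Fin k × Fin k)) : EuclideanSpace ℂ (Fin k × Fin k) :=
  WithLp.toLp 2 fun p => ∑ i, U p.1 i * v (i, p.2)

noncomputable def lift2 (v : EuclideanSpace ℂ (Fin 2 × Fin 2)) :
    EuclideanSpace ℂ (Fin 11 × Fin 11) :=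
  WithLp.toLp 2 fun p => if h : (p.1 : ℕ) < 2 ∧ (p.2 : ℕ) < 2 then v (⟨p.1, h.1⟩, ⟨p.2, h.2⟩) else 0

noncomputable def lift9 (v : EuclideanSpace ℂ (Fin 9 × Fin 9)) :
    EuclideanSpace ℂ (Fin 11 × Fin 11) :=
  WithLp.toLp 2 fun p =>
    if h : 2 ≤ (p.1 : ℕ) ∧ 2 ≤ (p.2 : ℕ) then
      v (⟨(p.1 : ℕ) - 2, by have := p.1.isLt; omega⟩,
         ⟨(p.2 : ℕ) - 2, by have := p.2.isLt; omega⟩)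
    else 0

/-- The states `|ψ_l⟩` of Eq. (2) of the paper. -/
noncomputable def psiFam (γ₁ γ₂ : ℂ) : Fin 3 → EuclideanSpace ℂ (Fin 11 × Fin 11) :=
  ![(Real.sqrt (2 / 11) : ℂ) • lift2 (PhiME 2)
      + (Real.sqrt (9 / 11) : ℂ) • lift9 (PhiME 9),
    (Real.sqrt (2 / 11) : ℂ) • (γ₁ • lift2 (opL (Xmat 2) (PhiME 2)))
      + (Real.sqrt (9 / 11) : ℂ) • lift9 (opL (Xmat 9 ^ 3) (PhiME 9)),
    (Real.sqrt (2 / 11) : ℂ) • (γ₂ • lift2 (opL (Zmat 2) (PhiME 2)))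
      + (Real.sqrt (9 / 11) : ℂ) • lift9 (opL (Xmat 9 ^ 6) (PhiME 9))]

/-- The post-measurement states `|ψ_l^{(0)}⟩`. -/
noncomputable def psiFam0 (γ₁ γ₂ : ℂ) : Fin 3 → EuclideanSpace ℂ (Fin 11 × Fin 11) :=
  ![(Real.sqrt (2 / 11) : ℂ) • lift2 (PhiME 2)
      + (Real.sqrt (9 / 11) : ℂ) • lift9 PsiNine,
    (Real.sqrt (2 / 11) : ℂ) • (γ₁ • lift2 (opL (Xmat 2) (PhiME 2)))
      + (Real.sqrt (9 / 11) : ℂ) • lift9 (opL (Xmat 9 ^ 3) PsiNine),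
    (Real.sqrt (2 / 11) : ℂ) • (γ₂ • lift2 (opL (Zmat 2) (PhiME 2)))
      + (Real.sqrt (9 / 11) : ℂ) • lift9 (opL (Xmat 9 ^ 6) PsiNine)]

/-- `(1/√3) ∑ l, |l⟩ ⊗ |χ_l⟩ ∈ ℂ³ ⊗ (ℂ¹¹ ⊗ ℂ¹¹)`. -/
noncomputable def totalState (χ : Fin 3 → EuclideanSpace ℂ (Fin 11 × Fin 11)) :
    EuclideanSpace ℂ (Fin 3 × (Fin 11 × Fin 11)) :=
  WithLp.toLp 2 fun p => ((1 / Real.sqrt 3 : ℝ) : ℂ) * χ p.1 p.2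

/-- Diagonal entries of `M_0^B = √(1/3)(|0⟩⟨0|+|1⟩⟨1|) ⊕ (|0⟩⟨0|+|1⟩⟨1|+|2⟩⟨2|)`
on `ℂ¹¹ = ℂ² ⊕ ℂ⁹`. -/
noncomputable def M0Bdiag (i : Fin 11) : ℂ :=
  if (i : ℕ) < 2 then ((Real.sqrt (1 / 3) : ℝ) : ℂ) else if (i : ℕ) < 5 then 1 else 0

/-- Action of `I ⊗ I ⊗ M_0^B` on `ℂ³ ⊗ ℂ¹¹ ⊗ ℂ¹¹` (third tensor factor). -/
noncomputable def applyM0B (ψ : EuclideanSpace ℂ (Fin 3 × (Fin 11 × Fin 11))) :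
    EuclideanSpace ℂ (Fin 3 × (Fin 11 × Fin 11)) :=
  WithLp.toLp 2 fun p => M0Bdiag p.2.2 * ψ p

/-!
On the `ℂ²` block `M_0^B` is the scalar `1/√3`; on the `ℂ⁹` block it projects the second
factor onto `span {|0⟩, |1⟩, |2⟩}`, which sends `(U ⊗ I)|Φ₉⟩` to `(1/√3)(U ⊗ I)|Ψ⟩` since
`1/√9 = (1/√3)²`. So `I ⊗ I ⊗ M_0^B` maps `|ψ⟩` to `1/√3` times the claimed state, and it
remains to see that the latter is a unit vector. Each `|ψ_l^{(0)}⟩` is one: `X` and `Z` are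
unitary, `|γ_l| = 1`, and the two blocks are orthogonal with weights `2/11 + 9/11 = 1`.
-/

open scoped Kronecker

theorem EuclideanSpace.norm_eq_of_extend_by_zero {𝕜 ι κ : Type*} [RCLike 𝕜] [Fintype ι]
    [Fintype κ] {e : ι → κ} (he : Function.Injective e) {v : EuclideanSpace 𝕜 ι}
    {w : EuclideanSpace 𝕜 κ} (hw : ∀ i, w (e i) = v i) (hw₀ : ∀ p ∉ Set.range e, w p = 0) :
    ‖w‖ = ‖v‖ := by
  rw [EuclideanSpace.norm_eq, EuclideanSpace.norm_eq,
    Fintype.sum_of_injective e he (fun i => ‖v i‖ ^ 2) (fun p => ‖w p‖ ^ 2)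
      (fun p hp => by simp [hw₀ p hp]) (fun i => by simp [hw i])]

theorem one_div_norm_smul_ofReal_smul {𝕜 E : Type*} [RCLike 𝕜] [NormedAddCommGroup E]
    [NormedSpace 𝕜 E] {c : ℝ} (hc : 0 < c) {x : E} (hx : ‖x‖ = 1) :
    ((1 / ‖(c : 𝕜) • x‖ : ℝ) : 𝕜) • ((c : 𝕜) • x) = x := by
  rw [smul_smul, norm_smul, hx, mul_one, RCLike.norm_ofReal, abs_of_pos hc,
    ← RCLike.ofReal_mul, one_div_mul_cancel hc.ne', RCLike.ofReal_one, one_smul]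

theorem opL_one {k : ℕ} (v : EuclideanSpace ℂ (Fin k × Fin k)) : opL 1 v = v := by
  ext p
  simp [opL, Matrix.one_apply, ite_mul]

theorem opL_eq_toEuclideanCLM_kronecker {k : ℕ} (U : Matrix (Fin k) (Fin k) ℂ)
    (v : EuclideanSpace ℂ (Fin k × Fin k)) :
    opL U v = Matrix.toEuclideanCLM (n := Fin k × Fin k) (𝕜 := ℂ) (U ⊗ₖ 1) v := by
  ext p
  simp [opL, Matrix.mulVec, dotProduct, Fintype.sum_prod_type, Matrix.one_apply]

theorem norm_opL_of_mem_unitary {k : ℕ} {U : Matrix (Fin k) (Fin k) ℂ}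
    (hU : U ∈ unitary (Matrix (Fin k) (Fin k) ℂ)) (v : EuclideanSpace ℂ (Fin k × Fin k)) :
    ‖opL U v‖ = ‖v‖ := by
  rw [opL_eq_toEuclideanCLM_kronecker]
  exact ContinuousLinearMap.norm_map_of_mem_unitary
    (Unitary.map_mem _ (Matrix.kronecker_mem_unitary hU (one_mem _))) v

theorem Xmat_apply_eq_ite {k : ℕ} (i j : Fin k) :
    Xmat k i j = if i = ⟨((j : ℕ) + 1) % k, Nat.mod_lt _ j.pos⟩ then 1 else 0 := by
  simp [Xmat, Fin.ext_iff]

theorem Xmat_mem_unitary (k : ℕ) : Xmat k ∈ unitary (Matrix (Fin k) (Fin k) ℂ) := by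
  rw [← Matrix.unitaryGroup, Matrix.mem_unitaryGroup_iff']
  ext i j
  have hinj : ((j : ℕ) + 1) % k = ((i : ℕ) + 1) % k ↔ i = j :=
    ⟨fun h => Fin.ext ((Nat.ModEq.add_right_cancel' 1 h).eq_of_lt_of_lt j.isLt i.isLt).symm,
      fun h => h ▸ rfl⟩
  simp [Matrix.mul_apply, Xmat_apply_eq_ite, Matrix.one_apply, hinj]

theorem Zmat_mem_unitary (k : ℕ) : Zmat k ∈ unitary (Matrix (Fin k) (Fin k) ℂ) := by
  rw [← Matrix.unitaryGroup, Matrix.mem_unitaryGroup_iff', Zmat, Matrix.star_eq_conjTranspose,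
    Matrix.diagonal_conjTranspose, Matrix.diagonal_mul_diagonal, ← Matrix.diagonal_one]
  congr 1
  funext l
  rw [Pi.star_apply, Complex.star_def, Complex.conj_mul', Complex.norm_exp]
  simp

theorem lift2_apply_of_le {p : Fin 11 × Fin 11} (hp : 2 ≤ (p.1 : ℕ))
    (u : EuclideanSpace ℂ (Fin 2 × Fin 2)) : lift2 u p = 0 := by
  simp only [lift2, WithLp.ofLp_toLp]
  rw [dif_neg (by omega)]

theorem lift9_apply_of_lt {p : Fin 11 × Fin 11} (hp : (p.1 : ℕ) < 2)
    (w : EuclideanSpace ℂ (Fin 9 × Fin 9)) : lift9 w p = 0 := by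
  simp only [lift9, WithLp.ofLp_toLp]
  rw [dif_neg (by omega)]

theorem norm_lift2 (v : EuclideanSpace ℂ (Fin 2 × Fin 2)) : ‖lift2 v‖ = ‖v‖ := by
  refine EuclideanSpace.norm_eq_of_extend_by_zero
    (e := Prod.map (Fin.castLE (by norm_num)) (Fin.castLE (by norm_num)))
    (Prod.map_injective.2 ⟨Fin.castLE_injective _, Fin.castLE_injective _⟩)
    (fun i => by rw [lift2, WithLp.ofLp_toLp, dif_pos ⟨i.1.isLt, i.2.isLt⟩]; rfl) (fun p hp => ?_)
  rw [lift2, WithLp.ofLp_toLp, dif_neg]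
  rintro ⟨h1, h2⟩
  exact hp ⟨(⟨p.1, h1⟩, ⟨p.2, h2⟩), rfl⟩

theorem norm_lift9 (v : EuclideanSpace ℂ (Fin 9 × Fin 9)) : ‖lift9 v‖ = ‖v‖ := by
  refine EuclideanSpace.norm_eq_of_extend_by_zero
    (e := Prod.map (Fin.natAdd 2 : Fin 9 → Fin 11) (Fin.natAdd 2 : Fin 9 → Fin 11))
    (Prod.map_injective.2 ⟨Fin.natAdd_injective 9 2, Fin.natAdd_injective 9 2⟩)
    (fun i => ?_) (fun p hp => ?_)
  · simp only [lift9, WithLp.ofLp_toLp, Prod.map_fst, Prod.map_snd, Fin.val_natAdd]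
    rw [dif_pos (by omega)]
    simp only [Nat.add_sub_cancel_left]
  · rw [lift9, WithLp.ofLp_toLp, dif_neg]
    rintro ⟨h1, h2⟩
    refine hp ⟨(⟨p.1 - 2, by omega⟩, ⟨p.2 - 2, by omega⟩), ?_⟩
    ext <;> simp <;> omega

theorem inner_lift2_lift9 (u : EuclideanSpace ℂ (Fin 2 × Fin 2))
    (w : EuclideanSpace ℂ (Fin 9 × Fin 9)) : inner ℂ (lift2 u) (lift9 w) = 0 := by
  refine Finset.sum_eq_zero fun p _ => ?_
  rcases lt_or_ge (p.1 : ℕ) 2 with h | h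
  · simp [lift9_apply_of_lt h]
  · simp [lift2_apply_of_le h]

theorem norm_smul_lift2_add_smul_lift9_sq (a b : ℂ) (u : EuclideanSpace ℂ (Fin 2 × Fin 2))
    (w : EuclideanSpace ℂ (Fin 9 × Fin 9)) :
    ‖a • lift2 u + b • lift9 w‖ ^ 2 = ‖a‖ ^ 2 * ‖u‖ ^ 2 + ‖b‖ ^ 2 * ‖w‖ ^ 2 := by
  rw [sq, norm_add_sq_eq_norm_sq_add_norm_sq_of_inner_eq_zero _ _
      (by rw [inner_smul_left, inner_smul_right, inner_lift2_lift9, mul_zero, mul_zero]),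
    norm_smul, norm_smul, norm_lift2, norm_lift9]
  ring

theorem norm_PhiME {k : ℕ} (hk : 0 < k) : ‖PhiME k‖ = 1 := by
  have hk' : (k : ℝ) ≠ 0 := by positivity
  have hentry : ∀ a b : Fin k, ‖PhiME k (a, b)‖ ^ 2 = if a = b then 1 / (k : ℝ) else 0 := by
    intro a b
    split_ifs with h <;> simp [PhiME, h]
  rw [EuclideanSpace.norm_eq, Real.sqrt_eq_one, Fintype.sum_prod_type]
  simp [hentry, hk']

theorem norm_PsiNine : ‖PsiNine‖ = ‖PhiME 3‖ := by
  refine EuclideanSpace.norm_eq_of_extend_by_zero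
    (e := Prod.map (Fin.castLE (by norm_num)) (Fin.castLE (by norm_num)))
    (Prod.map_injective.2 ⟨Fin.castLE_injective _, Fin.castLE_injective _⟩)
    (fun i => ?_) (fun p hp => ?_)
  · simp [PsiNine, PhiME, Fin.ext_iff]
  · rw [PsiNine, WithLp.ofLp_toLp, if_neg]
    rintro ⟨h, h3⟩
    exact hp ⟨(⟨p.1, h3⟩, ⟨p.2, h ▸ h3⟩), by ext <;> simp [h]⟩

theorem norm_psiFam0 {γ₁ γ₂ : ℂ} (h₁ : ‖γ₁‖ = 1) (h₂ : ‖γ₂‖ = 1) (l : Fin 3) :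
    ‖psiFam0 γ₁ γ₂ l‖ = 1 := by
  have hcombo : ∀ (c : ℂ) u w, ‖c‖ = 1 → ‖u‖ = 1 → ‖w‖ = 1 →
      ‖(Real.sqrt (2 / 11) : ℂ) • (c • lift2 u) + (Real.sqrt (9 / 11) : ℂ) • lift9 w‖ = 1 := by
    intro c u w hc hu hw
    rw [← pow_eq_one_iff_of_nonneg (norm_nonneg _) two_ne_zero, smul_smul,
      norm_smul_lift2_add_smul_lift9_sq, norm_mul, hc, hu, hw]
    simp only [Complex.norm_real, Real.norm_of_nonneg (Real.sqrt_nonneg _), one_pow, mul_one]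
    rw [Real.sq_sqrt (by norm_num), Real.sq_sqrt (by norm_num)]
    norm_num
  have hΦ₂ : ‖PhiME 2‖ = 1 := norm_PhiME two_pos
  have hΨ : ‖PsiNine‖ = 1 := norm_PsiNine.trans (norm_PhiME three_pos)
  fin_cases l
  · have h₀ := hcombo 1 _ _ norm_one hΦ₂ hΨ
    rw [one_smul] at h₀
    exact h₀
  · exact hcombo γ₁ _ _ h₁ ((norm_opL_of_mem_unitary (Xmat_mem_unitary 2) _).trans hΦ₂)
      ((norm_opL_of_mem_unitary (pow_mem (Xmat_mem_unitary 9) 3) _).trans hΨ)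
  · exact hcombo γ₂ _ _ h₂ ((norm_opL_of_mem_unitary (Zmat_mem_unitary 2) _).trans hΦ₂)
      ((norm_opL_of_mem_unitary (pow_mem (Xmat_mem_unitary 9) 6) _).trans hΨ)

theorem norm_totalState {χ : Fin 3 → EuclideanSpace ℂ (Fin 11 × Fin 11)} (hχ : ∀ l, ‖χ l‖ = 1) :
    ‖totalState χ‖ = 1 := by
  have hχ' : ∀ l, ∑ p, ‖χ l p‖ ^ 2 = 1 := fun l => by
    rw [← EuclideanSpace.norm_sq_eq, hχ l, one_pow]
  rw [← pow_eq_one_iff_of_nonneg (norm_nonneg _) two_ne_zero, EuclideanSpace.norm_sq_eq,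
    Fintype.sum_prod_type]
  simp only [totalState, WithLp.ofLp_toLp, norm_mul, mul_pow, ← Finset.mul_sum, hχ']
  norm_num [Complex.norm_real, div_pow]

theorem M0Bdiag_mul_lift2 (v : EuclideanSpace ℂ (Fin 2 × Fin 2)) (p : Fin 11 × Fin 11) :
    M0Bdiag p.2 * lift2 v p = ((1 / Real.sqrt 3 : ℝ) : ℂ) * lift2 v p := by
  by_cases h : (p.1 : ℕ) < 2 ∧ (p.2 : ℕ) < 2
  · rw [M0Bdiag, if_pos h.2, one_div (Real.sqrt 3), ← Real.sqrt_inv, one_div]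
  · simp only [lift2, WithLp.ofLp_toLp, dif_neg h, mul_zero]

theorem truncate_opL_PhiME_nine (U : Matrix (Fin 9) (Fin 9) ℂ) (a b : Fin 9) :
    (if (b : ℕ) < 3 then 1 else 0) * opL U (PhiME 9) (a, b)
      = ((1 / Real.sqrt 3 : ℝ) : ℂ) * opL U PsiNine (a, b) := by
  have hsqrt : ((1 / Real.sqrt (9 : ℕ) : ℝ) : ℂ)
      = ((1 / Real.sqrt 3 : ℝ) : ℂ) * ((1 / Real.sqrt 3 : ℝ) : ℂ) := by
    rw [← Complex.ofReal_mul, div_mul_div_comm, one_mul, Real.mul_self_sqrt (by norm_num),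
      show ((9 : ℕ) : ℝ) = 3 ^ 2 by norm_num, Real.sqrt_sq (by norm_num)]
  simp only [opL, PhiME, PsiNine, WithLp.ofLp_toLp, mul_ite, mul_zero, ite_and,
    Finset.sum_ite_eq', Finset.mem_univ, if_true, hsqrt]
  split_ifs <;> ring

theorem M0Bdiag_mul_lift9_opL_PhiME (U : Matrix (Fin 9) (Fin 9) ℂ) (p : Fin 11 × Fin 11) :
    M0Bdiag p.2 * lift9 (opL U (PhiME 9)) p
      = ((1 / Real.sqrt 3 : ℝ) : ℂ) * lift9 (opL U PsiNine) p := by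
  by_cases h : 2 ≤ (p.1 : ℕ) ∧ 2 ≤ (p.2 : ℕ)
  · simp only [lift9, WithLp.ofLp_toLp, dif_pos h, ← truncate_opL_PhiME_nine, M0Bdiag,
      if_neg (Nat.not_lt.2 h.2)]
    congr 1
    split_ifs <;> first | rfl | omega
  · simp only [lift9, WithLp.ofLp_toLp, dif_neg h, mul_zero]

theorem M0Bdiag_mul_psiFam (γ₁ γ₂ : ℂ) (l : Fin 3) (p : Fin 11 × Fin 11) :
    M0Bdiag p.2 * psiFam γ₁ γ₂ l p = ((1 / Real.sqrt 3 : ℝ) : ℂ) * psiFam0 γ₁ γ₂ l p := by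
  have hΦ := M0Bdiag_mul_lift9_opL_PhiME 1 p
  rw [opL_one, opL_one] at hΦ
  fin_cases l <;>
    simp only [psiFam, psiFam0, Fin.zero_eta, Fin.mk_one, Fin.reduceFinMk, Matrix.cons_val_zero,
      Matrix.cons_val_one, Matrix.cons_val_two, Matrix.head_cons, Matrix.tail_cons,
      PiLp.add_apply, PiLp.smul_apply, smul_eq_mul]
  · linear_combination (Real.sqrt (2 / 11) : ℂ) * M0Bdiag_mul_lift2 (PhiME 2) p
      + (Real.sqrt (9 / 11) : ℂ) * hΦ
  · linear_combination (Real.sqrt (2 / 11) : ℂ) * γ₁ * M0Bdiag_mul_lift2 _ p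
      + (Real.sqrt (9 / 11) : ℂ) * M0Bdiag_mul_lift9_opL_PhiME (Xmat 9 ^ 3) p
  · linear_combination (Real.sqrt (2 / 11) : ℂ) * γ₂ * M0Bdiag_mul_lift2 _ p
      + (Real.sqrt (9 / 11) : ℂ) * M0Bdiag_mul_lift9_opL_PhiME (Xmat 9 ^ 6) p

theorem applyM0B_totalState_psiFam (γ₁ γ₂ : ℂ) :
    applyM0B (totalState (psiFam γ₁ γ₂))
      = ((1 / Real.sqrt 3 : ℝ) : ℂ) • totalState (psiFam0 γ₁ γ₂) := by
  ext ⟨l, p⟩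
  simp only [applyM0B, totalState, WithLp.ofLp_toLp, PiLp.smul_apply, smul_eq_mul]
  rw [mul_left_comm, M0Bdiag_mul_psiFam]

/-- Applying `I ⊗ I ⊗ M_0^B` to `|ψ⟩ = (1/√3)∑_l |l⟩⊗|ψ_l⟩` and renormalizing yields
`(1/√3)∑_l |l⟩⊗|ψ_l^{(0)}⟩`. -/
theorem post_measurement_state (γ₁ γ₂ : ℂ) (h₁ : ‖γ₁‖ = 1) (h₂ : ‖γ₂‖ = 1) :
    ((1 / ‖applyM0B (totalState (psiFam γ₁ γ₂))‖ : ℝ) : ℂ) •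
        applyM0B (totalState (psiFam γ₁ γ₂))
      = totalState (psiFam0 γ₁ γ₂) := by
  have hc : (0 : ℝ) < 1 / Real.sqrt 3 := by positivity
  rw [applyM0B_totalState_psiFam]
  exact one_div_norm_smul_ofReal_smul hc (norm_totalState (norm_psiFam0 h₁ h₂))
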